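/- arXiv:1802.02667 — 6 statements merged into one kernel-verified Lean document; each statement's English description precedes it below -/
import Mathlib

section
/- Let ξ be an exponentially distributed random variable with mean μ > 0, and let a ≥ 0, b > 0 be constants. Then log₂(a + b·μ) − γ·log₂(e) ≤ E[log₂(a + b·ξ)] ≤ log₂(a + b·μ), where γ is the Euler–Mascheroni constant. -/
/-!
After the substitution `ξ = μ η` with `η` a standard exponential variable, both bounds come from
tangent lines at the mean `1`. The function `t ↦ log (a + b t)` is concave, so it lies below its
tangent line, which gives the upper bound (Jensen). The function `t ↦ log (a + b t) - log t =
log (b + a / t)` is convex, so it lies above its tangent line; integrating, the affine part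
contributes `log (a + b)` and `E[log η] = Γ'(1) = -γ`, which gives the lower bound.
-/

open MeasureTheory Real Set

local notation "γ" => Real.eulerMascheroniConstant

theorem integrableOn_mul_exp_neg : IntegrableOn (fun t ↦ t * exp (-t)) (Ioi 0) := by
  convert GammaIntegral_convergent two_pos using 2 with t
  norm_num [mul_comm]

theorem integral_mul_exp_neg : ∫ t in Ioi (0 : ℝ), t * exp (-t) = 1 := by
  convert Gamma_eq_integral two_pos ▸ Gamma_two using 3 with t
  norm_num [mul_comm]

theorem integrableOn_sub_one_mul_exp_neg : IntegrableOn (fun t ↦ (t - 1) * exp (-t)) (Ioi 0) := by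
  simp_rw [sub_mul, one_mul]
  exact integrableOn_mul_exp_neg.sub (integrableOn_exp_neg_Ioi 0)

theorem integral_sub_one_mul_exp_neg : ∫ t in Ioi (0 : ℝ), (t - 1) * exp (-t) = 0 := by
  simp_rw [sub_mul, one_mul]
  rw [integral_sub integrableOn_mul_exp_neg (integrableOn_exp_neg_Ioi 0), integral_mul_exp_neg,
    integral_exp_neg_Ioi_zero, sub_self]

theorem integrableOn_affine_mul_exp_neg (c d : ℝ) :
    IntegrableOn (fun t ↦ (c + d * (t - 1)) * exp (-t)) (Ioi 0) := by
  simp_rw [add_mul, mul_assoc]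
  exact ((integrableOn_exp_neg_Ioi 0).const_mul c).add (integrableOn_sub_one_mul_exp_neg.const_mul d)

theorem integral_affine_mul_exp_neg (c d : ℝ) :
    ∫ t in Ioi (0 : ℝ), (c + d * (t - 1)) * exp (-t) = c := by
  simp_rw [add_mul, mul_assoc]
  rw [integral_add ((integrableOn_exp_neg_Ioi 0).const_mul c)
      (integrableOn_sub_one_mul_exp_neg.const_mul d), integral_const_mul, integral_const_mul,
    integral_exp_neg_Ioi_zero, integral_sub_one_mul_exp_neg]
  ring

theorem abs_log_le_two_mul_rpow_add {t : ℝ} (ht : 0 < t) :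
    |log t| ≤ 2 * (t ^ (1 / 2 : ℝ) + t ^ (-(1 / 2) : ℝ)) := by
  have hpos := log_le_rpow_div ht.le one_half_pos
  have hneg := log_le_rpow_div (inv_pos.2 ht).le one_half_pos
  rw [log_inv, inv_rpow ht.le, ← rpow_neg ht.le] at hneg
  have h₁ : 0 ≤ t ^ (1 / 2 : ℝ) := rpow_nonneg ht.le _
  have h₂ : 0 ≤ t ^ (-(1 / 2) : ℝ) := rpow_nonneg ht.le _
  exact abs_le.2 ⟨by linarith, by linarith⟩

theorem integrableOn_log_mul_exp_neg : IntegrableOn (fun t ↦ log t * exp (-t)) (Ioi 0) := by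
  have hbound := ((GammaIntegral_convergent (by norm_num : (0 : ℝ) < 3 / 2)).add
    (GammaIntegral_convergent one_half_pos)).const_mul 2
  refine hbound.mono' (by fun_prop) ?_
  filter_upwards [ae_restrict_mem measurableSet_Ioi] with t ht
  rw [norm_mul, norm_eq_abs, norm_of_nonneg (exp_pos _).le]
  calc |log t| * exp (-t) ≤ 2 * (t ^ (1 / 2 : ℝ) + t ^ (-(1 / 2) : ℝ)) * exp (-t) := by
        gcongr; exact abs_log_le_two_mul_rpow_add ht
    _ = _ := by norm_num [Pi.add_apply]; ring

/-- The integral is the derivative of the Euler integral for `Γ` at `1`. -/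
theorem integral_log_mul_exp_neg : ∫ t in Ioi (0 : ℝ), log t * exp (-t) = -γ := by
  have hderiv : HasDerivAt Complex.Gamma
      (∫ t : ℝ in Ioi 0, (t : ℂ) ^ ((1 : ℂ) - 1) * (log t * exp (-t))) 1 := by
    refine (Complex.hasDerivAt_GammaIntegral (by norm_num)).congr_of_eventuallyEq ?_
    filter_upwards [(Complex.continuous_re.isOpen_preimage _ isOpen_Ioi).mem_nhds
      (by norm_num : (1 : ℂ) ∈ Complex.re ⁻¹' Ioi 0)] with s hs using Complex.Gamma_eq_integral hs
  have := hderiv.unique Complex.hasDerivAt_Gamma_one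
  simp only [sub_self, Complex.cpow_zero, one_mul] at this
  exact_mod_cast this

theorem setIntegral_mul_exp_neg_div (f : ℝ → ℝ) {μ : ℝ} (hμ : 0 < μ) :
    ∫ x in Ioi 0, f x * (1 / μ * exp (-x / μ)) = ∫ t in Ioi 0, f (μ * t) * exp (-t) := by
  rw [← mul_zero μ, ← integral_comp_mul_left_Ioi' _ _ hμ, mul_zero, smul_eq_mul,
    ← integral_const_mul]
  refine setIntegral_congr_fun measurableSet_Ioi fun t _ ↦ ?_
  field_simp

theorem log_le_log_add_sub_div {m y : ℝ} (hm : 0 < m) (hy : 0 < y) :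
    log y ≤ log m + (y - m) / m := by
  have h := log_le_sub_one_of_pos (div_pos hy hm)
  rw [log_div hy.ne' hm.ne', div_sub_one hm.ne'] at h
  linarith

section TangentLines

variable {a b : ℝ}

theorem log_add_mul_le (ha : 0 ≤ a) (hb : 0 < b) {t : ℝ} (ht : 0 < t) :
    log (a + b * t) ≤ log (a + b) + b / (a + b) * (t - 1) := by
  have hab : 0 < a + b := by positivity
  convert log_le_log_add_sub_div hab (by positivity : 0 < a + b * t) using 2
  field_simp
  ring

/-- The tangent line at `1` of the convex function `t ↦ log (a + b * t) - log t`. -/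
theorem le_log_add_mul (ha : 0 ≤ a) (hb : 0 < b) {t : ℝ} (ht : 0 < t) :
    log (a + b) + -a / (a + b) * (t - 1) + log t ≤ log (a + b * t) := by
  have hab : 0 < a + b := by positivity
  have habt : 0 < a + b * t := by positivity
  have htangent := log_le_log_add_sub_div habt (by positivity : 0 < (a + b) * t)
  have hslope : ((a + b) * t - (a + b * t)) / (a + b * t) ≤ a / (a + b) * (t - 1) := by
    rw [div_le_iff₀ habt]
    have hdiff : a / (a + b) * (t - 1) * (a + b * t) - ((a + b) * t - (a + b * t))
        = a * b * (t - 1) ^ 2 / (a + b) := by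
      field_simp
      ring
    have : 0 ≤ a * b * (t - 1) ^ 2 / (a + b) := by positivity
    linarith
  rw [log_mul hab.ne' ht.ne'] at htangent
  rw [neg_div, neg_mul]
  linarith

theorem integrableOn_log_add_mul_mul_exp_neg (ha : 0 ≤ a) (hb : 0 < b) :
    IntegrableOn (fun t ↦ log (a + b * t) * exp (-t)) (Ioi 0) := by
  refine integrable_of_le_of_le (by fun_prop) ?_ ?_
    ((integrableOn_affine_mul_exp_neg (log (a + b)) (-a / (a + b))).add
      integrableOn_log_mul_exp_neg)
    (integrableOn_affine_mul_exp_neg (log (a + b)) (b / (a + b)))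
  · filter_upwards [ae_restrict_mem measurableSet_Ioi] with t ht
    rw [Pi.add_apply, ← add_mul]
    exact mul_le_mul_of_nonneg_right (le_log_add_mul ha hb ht) (exp_pos _).le
  · filter_upwards [ae_restrict_mem measurableSet_Ioi] with t ht
    exact mul_le_mul_of_nonneg_right (log_add_mul_le ha hb ht) (exp_pos _).le

theorem integral_log_add_mul_mul_exp_neg_le (ha : 0 ≤ a) (hb : 0 < b) :
    ∫ t in Ioi 0, log (a + b * t) * exp (-t) ≤ log (a + b) :=
  calc _ ≤ ∫ t in Ioi 0, (log (a + b) + b / (a + b) * (t - 1)) * exp (-t) :=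
        setIntegral_mono_on (integrableOn_log_add_mul_mul_exp_neg ha hb)
          (integrableOn_affine_mul_exp_neg _ _) measurableSet_Ioi fun _ ht ↦
            mul_le_mul_of_nonneg_right (log_add_mul_le ha hb ht) (exp_pos _).le
    _ = log (a + b) := integral_affine_mul_exp_neg _ _

theorem log_add_sub_le_integral_log_add_mul_mul_exp_neg (ha : 0 ≤ a) (hb : 0 < b) :
    log (a + b) - γ ≤ ∫ t in Ioi 0, log (a + b * t) * exp (-t) :=
  calc log (a + b) - γ
      = ∫ t in Ioi 0, ((log (a + b) + -a / (a + b) * (t - 1)) * exp (-t) + log t * exp (-t)) := by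
        rw [integral_add (integrableOn_affine_mul_exp_neg _ _) integrableOn_log_mul_exp_neg,
          integral_affine_mul_exp_neg, integral_log_mul_exp_neg, sub_eq_add_neg]
    _ ≤ _ := setIntegral_mono_on
        ((integrableOn_affine_mul_exp_neg _ _).add integrableOn_log_mul_exp_neg)
        (integrableOn_log_add_mul_mul_exp_neg ha hb) measurableSet_Ioi fun _ ht ↦ by
          rw [← add_mul]
          exact mul_le_mul_of_nonneg_right (le_log_add_mul ha hb ht) (exp_pos _).le

end TangentLines

/-- Jensen gap for the exponential distribution: for ξ exponentially distributed with
mean μ > 0 (density (1/μ)·exp(−x/μ) on [0,∞)) and constants a ≥ 0, b > 0,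
  log₂(a + bμ) − γ·log₂ e ≤ E[log₂(a + bξ)] ≤ log₂(a + bμ). -/
theorem exponential_log_jensen_gap (μ a b : ℝ) (hμ : 0 < μ) (ha : 0 ≤ a) (hb : 0 < b) :
    Real.logb 2 (a + b * μ) - Real.eulerMascheroniConstant * Real.logb 2 (Real.exp 1)
        ≤ ∫ x in Set.Ioi (0 : ℝ), Real.logb 2 (a + b * x) * ((1 / μ) * Real.exp (-x / μ))
    ∧ ∫ x in Set.Ioi (0 : ℝ), Real.logb 2 (a + b * x) * ((1 / μ) * Real.exp (-x / μ))
        ≤ Real.logb 2 (a + b * μ) := by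
  have hbμ : 0 < b * μ := mul_pos hb hμ
  have hexpect : ∫ x in Ioi 0, logb 2 (a + b * x) * (1 / μ * exp (-x / μ))
      = (∫ t in Ioi 0, log (a + b * μ * t) * exp (-t)) / log 2 := by
    rw [setIntegral_mul_exp_neg_div _ hμ, ← integral_div]
    refine setIntegral_congr_fun measurableSet_Ioi fun t _ ↦ ?_
    rw [logb, mul_assoc]
    ring
  have hgap : logb 2 (a + b * μ) - γ * logb 2 (exp 1) = (log (a + b * μ) - γ) / log 2 := by
    rw [logb, logb, log_exp]
    ring
  rw [hexpect, hgap, logb]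
  have hlog2 : 0 < log 2 := log_pos one_lt_two
  exact ⟨by gcongr; exact log_add_sub_le_integral_log_add_mul_mul_exp_neg ha hbμ,
    by gcongr; exact integral_log_add_mul_mul_exp_neg_le ha hbμ⟩
end

section
/- For all x > 0, the exponential integral satisfies (x/2)·ln(1 + 2/x) ≤ x·e^x·E₁(x) ≤ x·ln(1 + 1/x). In particular, for an exponentially distributed random variable ξ with mean μ and constant b > 0, (b/(2μ))·ln(1 + 2μ/b) ≤ E[b/(b+ξ)] ≤ (b/μ)·ln(1 + μ/b). -/
/-!
For `k ≥ 0`, the function `-e^{-t} log (1 + k/t)` is an explicit antiderivative of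
`e^{-t} (log (1 + k/t) + k/(t(t+k)))`, so the integral of the latter over `(x, ∞)` is
`e^{-x} log (1 + k/x)`. The elementary inequalities `1/(t+1) ≤ log (1 + 1/t)` (from
`1 - 1/y ≤ log y`) and `log (1 + 2/t) ≤ 2(t+1)/(t(t+2))` (from `y ≤ sinh y` at
`y = log (1 + 2/t)`) place `1/t` between half of the bracket for `k = 2` and the bracket for
`k = 1`; multiplying by `e^{-t}` and integrating over `(x, ∞)` gives
`e^{-x} log (1 + 2/x) / 2 ≤ E₁(x) ≤ e^{-x} log (1 + 1/x)`. The substitution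
`t = (b + ξ)/μ` turns `E[b/(b+ξ)]` into `(b/μ) e^{b/μ} E₁(b/μ)`.
-/

open MeasureTheory Real Set

/-- The exponential integral E₁(x) = ∫ₓ^∞ e^{−t}/t dt. -/
noncomputable def expIntegralE1 (x : ℝ) : ℝ := ∫ t in Set.Ioi x, Real.exp (-t) / t

open Filter Topology

theorem Real.log_le_sub_inv_div_two {x : ℝ} (hx : 1 ≤ x) : log x ≤ (x - x⁻¹) / 2 := by
  have h := self_le_sinh_iff.2 (log_nonneg hx)
  rwa [sinh_log (by linarith)] at h

theorem inv_le_log_one_add_one_div_add {t : ℝ} (ht : 0 < t) :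
    t⁻¹ ≤ log (1 + 1 / t) + 1 / (t * (t + 1)) := by
  have h := one_sub_inv_le_log_of_pos (x := 1 + 1 / t) (by positivity)
  have e : 1 - (1 + 1 / t)⁻¹ = t⁻¹ - 1 / (t * (t + 1)) := by field_simp; ring
  linarith

theorem log_one_add_two_div_add_le {t : ℝ} (ht : 0 < t) :
    log (1 + 2 / t) + 2 / (t * (t + 2)) ≤ 2 / t := by
  have h := Real.log_le_sub_inv_div_two (x := 1 + 2 / t) (le_add_of_nonneg_right (by positivity))
  have e : (1 + 2 / t - (1 + 2 / t)⁻¹) / 2 = 2 / t - 2 / (t * (t + 2)) := by field_simp; ring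
  linarith

theorem hasDerivAt_log_one_add_div {k t : ℝ} (ht : t ≠ 0) (htk : t + k ≠ 0) :
    HasDerivAt (fun t => log (1 + k / t)) (-(k / (t * (t + k)))) t := by
  have h1 : 1 + k / t ≠ 0 := by
    rw [one_add_div ht]; exact div_ne_zero htk ht
  convert ((hasDerivAt_inv ht).const_mul k |>.const_add 1).log (by simpa [div_eq_mul_inv] using h1)
    using 1
  · ext s; simp [div_eq_mul_inv]
  · field_simp

theorem hasDerivAt_neg_exp_neg_mul_log_one_add_div {k t : ℝ} (ht : t ≠ 0) (htk : t + k ≠ 0) :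
    HasDerivAt (fun t => -(exp (-t) * log (1 + k / t)))
      (exp (-t) * (log (1 + k / t) + k / (t * (t + k)))) t := by
  have hexp : HasDerivAt (fun t => exp (-t)) (-exp (-t)) t := by
    simpa using (hasDerivAt_neg t).exp
  exact (hexp.mul (hasDerivAt_log_one_add_div ht htk)).neg.congr_deriv (by ring)

theorem tendsto_neg_exp_neg_mul_log_one_add_div_atTop (k : ℝ) :
    Tendsto (fun t => -(exp (-t) * log (1 + k / t))) atTop (𝓝 0) := by
  have hlog : Tendsto (fun t => log (1 + k / t)) atTop (𝓝 0) := by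
    have h : Tendsto (fun t => 1 + k / t) atTop (𝓝 1) := by
      simpa using tendsto_const_nhds.add (tendsto_const_nhds.div_atTop (tendsto_id (α := ℝ)))
    simpa [Function.comp_def] using (continuousAt_log one_ne_zero).tendsto.comp h
  simpa using (tendsto_exp_neg_atTop_nhds_zero.mul hlog).neg

section

variable {k x : ℝ}

theorem integrableOn_exp_neg_mul_log_one_add_div_add (hk : 0 ≤ k) (hx : 0 < x) :
    IntegrableOn (fun t => exp (-t) * (log (1 + k / t) + k / (t * (t + k)))) (Ioi x) := by
  refine integrableOn_Ioi_deriv_of_nonneg'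
    (fun t ht => hasDerivAt_neg_exp_neg_mul_log_one_add_div (hx.trans_le ht).ne'
      (add_pos_of_pos_of_nonneg (hx.trans_le ht) hk).ne')
    (fun t ht => ?_) (tendsto_neg_exp_neg_mul_log_one_add_div_atTop k)
  have ht : 0 < t := hx.trans ht
  have : 0 ≤ log (1 + k / t) := log_nonneg (le_add_of_nonneg_right (by positivity))
  positivity

theorem integral_exp_neg_mul_log_one_add_div_add (hk : 0 ≤ k) (hx : 0 < x) :
    ∫ t in Ioi x, exp (-t) * (log (1 + k / t) + k / (t * (t + k)))
      = exp (-x) * log (1 + k / x) := by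
  rw [integral_Ioi_of_hasDerivAt_of_tendsto'
    (fun t ht => hasDerivAt_neg_exp_neg_mul_log_one_add_div (hx.trans_le ht).ne'
      (add_pos_of_pos_of_nonneg (hx.trans_le ht) hk).ne')
    (integrableOn_exp_neg_mul_log_one_add_div_add hk hx)
    (tendsto_neg_exp_neg_mul_log_one_add_div_atTop k)]
  ring

end

theorem integrableOn_Ioi_exp_neg_div {x : ℝ} (hx : 0 < x) :
    IntegrableOn (fun t => exp (-t) / t) (Ioi x) := by
  refine (integrableOn_exp_neg_mul_log_one_add_div_add zero_le_one hx).mono'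
    (by fun_prop : Measurable fun t => exp (-t) / t).aestronglyMeasurable ?_
  filter_upwards [ae_restrict_mem measurableSet_Ioi] with t (ht : x < t)
  have ht : 0 < t := hx.trans ht
  rw [norm_of_nonneg (by positivity), div_eq_mul_inv]
  gcongr
  exact inv_le_log_one_add_one_div_add ht

theorem expIntegralE1_le_exp_neg_mul_log {x : ℝ} (hx : 0 < x) :
    expIntegralE1 x ≤ exp (-x) * log (1 + 1 / x) := by
  rw [expIntegralE1, ← integral_exp_neg_mul_log_one_add_div_add zero_le_one hx]
  refine setIntegral_mono_on (integrableOn_Ioi_exp_neg_div hx)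
    (integrableOn_exp_neg_mul_log_one_add_div_add zero_le_one hx) measurableSet_Ioi
    fun t (ht : x < t) => ?_
  rw [div_eq_mul_inv]
  gcongr
  exact inv_le_log_one_add_one_div_add (hx.trans ht)

theorem exp_neg_mul_log_le_two_mul_expIntegralE1 {x : ℝ} (hx : 0 < x) :
    exp (-x) * log (1 + 2 / x) ≤ 2 * expIntegralE1 x := by
  rw [expIntegralE1, ← integral_const_mul,
    ← integral_exp_neg_mul_log_one_add_div_add zero_le_two hx]
  refine setIntegral_mono_on (integrableOn_exp_neg_mul_log_one_add_div_add zero_le_two hx)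
    ((integrableOn_Ioi_exp_neg_div hx).const_mul 2) measurableSet_Ioi
    fun t (ht : x < t) => ?_
  calc exp (-t) * (log (1 + 2 / t) + 2 / (t * (t + 2))) ≤ exp (-t) * (2 / t) := by
        gcongr
        exact log_one_add_two_div_add_le (hx.trans ht)
    _ = 2 * (exp (-t) / t) := by ring

theorem integral_comp_add_right_Ioi {E : Type*} [NormedAddCommGroup E] [NormedSpace ℝ E]
    (g : ℝ → E) (a b : ℝ) : ∫ x in Ioi a, g (x + b) = ∫ x in Ioi (a + b), g x := by
  simpa [image_add_const_Ioi] using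
    ((measurePreserving_add_right volume b).setIntegral_image_emb
      (MeasurableEquiv.addRight b).measurableEmbedding g (Ioi a)).symm

theorem integral_div_add_mul_exponential_density {μ : ℝ} (hμ : 0 < μ) (b : ℝ) :
    ∫ x in Ioi (0 : ℝ), b / (b + x) * (1 / μ * exp (-x / μ))
      = b / μ * exp (b / μ) * expIntegralE1 (b / μ) := by
  have h : ∀ x, b / (b + x) * (1 / μ * exp (-x / μ))
      = b / μ * exp (b / μ) * (μ⁻¹ * (exp (-(μ⁻¹ * (x + b))) / (μ⁻¹ * (x + b)))) := by
    intro x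
    rw [show -(μ⁻¹ * (x + b)) = -x / μ + -(b / μ) by ring, exp_add, exp_neg]
    rcases eq_or_ne (x + b) 0 with hxb | hxb
    · -- both sides are `0` by the convention `y / 0 = 0`
      simp [hxb, add_comm b x]
    · have hbx : b + x ≠ 0 := by rwa [add_comm]
      field_simp
      ring
  simp_rw [h, integral_const_mul,
    integral_comp_add_right_Ioi (fun y => exp (-(μ⁻¹ * y)) / (μ⁻¹ * y)),
    integral_comp_mul_left_Ioi (fun t => exp (-t) / t) _ (inv_pos.2 hμ)]
  rw [zero_add, smul_eq_mul, inv_inv, inv_mul_cancel_left₀ hμ.ne', ← div_eq_inv_mul,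
    expIntegralE1]

theorem le_mul_exp_mul_expIntegralE1 {x : ℝ} (hx : 0 < x) :
    x / 2 * log (1 + 2 / x) ≤ x * exp x * expIntegralE1 x :=
  calc x / 2 * log (1 + 2 / x) = x * exp x * (exp (-x) * log (1 + 2 / x)) / 2 := by
        rw [exp_neg]; field_simp
    _ ≤ x * exp x * (2 * expIntegralE1 x) / 2 := by
        gcongr x * exp x * ?_ / 2
        exact exp_neg_mul_log_le_two_mul_expIntegralE1 hx
    _ = x * exp x * expIntegralE1 x := by ring

theorem mul_exp_mul_expIntegralE1_le {x : ℝ} (hx : 0 < x) :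
    x * exp x * expIntegralE1 x ≤ x * log (1 + 1 / x) :=
  calc x * exp x * expIntegralE1 x ≤ x * exp x * (exp (-x) * log (1 + 1 / x)) := by
        gcongr; exact expIntegralE1_le_exp_neg_mul_log hx
    _ = x * log (1 + 1 / x) := by rw [exp_neg]; field_simp

/-- For all x > 0, (x/2)·ln(1 + 2/x) ≤ x·eˣ·E₁(x) ≤ x·ln(1 + 1/x); and consequently,
for ξ exponentially distributed with mean μ > 0 and b > 0,
  (b/(2μ))·ln(1 + 2μ/b) ≤ E[b/(b+ξ)] ≤ (b/μ)·ln(1 + μ/b). -/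
theorem expIntegral_bounds (μ b : ℝ) (hμ : 0 < μ) (hb : 0 < b) :
    (∀ x : ℝ, 0 < x →
      (x / 2) * Real.log (1 + 2 / x) ≤ x * Real.exp x * expIntegralE1 x
      ∧ x * Real.exp x * expIntegralE1 x ≤ x * Real.log (1 + 1 / x))
    ∧ ((b / (2 * μ)) * Real.log (1 + 2 * μ / b)
          ≤ ∫ x in Set.Ioi (0 : ℝ), (b / (b + x)) * ((1 / μ) * Real.exp (-x / μ))
       ∧ ∫ x in Set.Ioi (0 : ℝ), (b / (b + x)) * ((1 / μ) * Real.exp (-x / μ))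
          ≤ (b / μ) * Real.log (1 + μ / b)) := by
  have ha : 0 < b / μ := div_pos hb hμ
  rw [integral_div_add_mul_exponential_density hμ b]
  refine ⟨fun x hx => ⟨le_mul_exp_mul_expIntegralE1 hx, mul_exp_mul_expIntegralE1_le hx⟩,
    ?_, ?_⟩
  · convert le_mul_exp_mul_expIntegralE1 ha using 2 <;> field_simp
  · convert mul_exp_mul_expIntegralE1_le ha using 3; field_simp
end

section
/- For every integer T ≥ 1, the digamma function satisfies ln(T + 1/2) < ψ(T + 1) < ln(T + e^{−γ}), where γ is the Euler–Mascheroni constant. -/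
open Filter Topology

local notation "γ" => Real.eulerMascheroniConstant

/-- The digamma function ψ(x) = Γ'(x)/Γ(x). -/
noncomputable def digamma (x : ℝ) : ℝ := deriv Real.Gamma x / Real.Gamma x

lemma digamma_nat_add_one (n : ℕ) :
    digamma ((n : ℝ) + 1) = (harmonic n : ℝ) - γ := by
  rw [digamma, Real.deriv_Gamma_nat, Real.Gamma_nat_eq_factorial,
    mul_div_cancel_left₀ _ (by exact_mod_cast n.factorial_ne_zero), neg_add_eq_sub]

lemma harmonic_cast_succ (n : ℕ) :
    ((harmonic (n + 1) : ℚ) : ℝ) = (harmonic n : ℝ) + 1 / ((n : ℝ) + 1) := by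
  rw [harmonic_succ]; push_cast; ring

/-- log (n+a) - log (n+b) → 0. -/
lemma tendsto_log_sub_log (a b : ℝ) :
    Tendsto (fun n : ℕ => Real.log ((n : ℝ) + a) - Real.log ((n : ℝ) + b)) atTop (𝓝 0) := by
  have hcomp : Tendsto (fun n : ℕ => (n : ℝ) + b) atTop atTop :=
    tendsto_atTop_add_const_right _ b tendsto_natCast_atTop_atTop
  have h := (Real.tendsto_log_comp_add_sub_log (a - b)).comp hcomp
  refine h.congr fun n => ?_
  simp only [Function.comp_apply]
  ring_nf

/-- Padé-type bound : e^x < (2+x)/(2-x) for 0 < x ≤ 1. -/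
lemma exp_lt_pade {x : ℝ} (hx : 0 < x) (hx1 : x ≤ 1) :
    Real.exp x < (2 + x) / (2 - x) := by
  have h := Real.exp_bound' hx.le hx1 (n := 4) (by norm_num)
  have hs : (∑ m ∈ Finset.range 4, x ^ m / m.factorial) = 1 + x + x ^ 2 / 2 + x ^ 3 / 6 := by
    simp [Finset.sum_range_succ, Nat.factorial]
  rw [hs] at h
  norm_num [Nat.factorial] at h
  rw [lt_div_iff₀ (by linarith)]
  nlinarith [mul_le_mul_of_nonneg_right h (show (0:ℝ) ≤ 2 - x by linarith),
    mul_pos (pow_pos hx 3) (show (0:ℝ) < 16 + 6 * x + 5 * x ^ 2 by positivity)]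

/-- Key inequality for the upper bound. -/
lemma key_upper (y : ℝ) (hy : 1 ≤ y) :
    1 + 1 / (y + 109 / 200) < Real.exp (1 / (y + 1)) := by
  have hy1 : (0:ℝ) < y + 1 := by linarith
  have hx : 0 < 1 / (y + 1) := by positivity
  have h := Real.sum_le_exp_of_nonneg hx.le 5
  have hs : (∑ m ∈ Finset.range 5, (1 / (y + 1)) ^ m / m.factorial)
      = 1 / (y + 1) + (1 / (y + 1)) ^ 2 / 2 + (1 / (y + 1)) ^ 3 / 6 + (1 / (y + 1)) ^ 4 / 24
        + 1 := by
    simp [Finset.sum_range_succ, Nat.factorial]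
    ring
  rw [hs] at h
  refine lt_of_lt_of_le ?_ h
  have h2 : (0:ℝ) < y + 109 / 200 := by linarith
  have key : 1 / (y + 109 / 200) <
      1 / (y + 1) + (1 / (y + 1)) ^ 2 / 2 + (1 / (y + 1)) ^ 3 / 6 + (1 / (y + 1)) ^ 4 / 24 := by
    have hsum : 1 / (y + 1) + (1 / (y + 1)) ^ 2 / 2 + (1 / (y + 1)) ^ 3 / 6 + (1 / (y + 1)) ^ 4 / 24
        = (24 * (y + 1) ^ 3 + 12 * (y + 1) ^ 2 + 4 * (y + 1) + 1) / (24 * (y + 1) ^ 4) := by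
      field_simp
      ring
    rw [hsum, div_lt_div_iff₀ h2 (by positivity)]
    have e1 : y ≤ y ^ 2 := by nlinarith
    have e2 : y ^ 2 ≤ y ^ 3 := by nlinarith
    nlinarith [e1, e2, hy]
  linarith

lemma gamma_lt_six_tenths : γ < 0.6 := by
  have h := Real.eulerMascheroniConstant_lt_eulerMascheroniSeq' 32
  have h32 : Real.eulerMascheroniSeq' 32 = ((harmonic 32 : ℚ) : ℝ) - Real.log 32 := by
    rw [Real.eulerMascheroniSeq']
    norm_num
  rw [h32] at h
  have hlog : Real.log 32 = 5 * Real.log 2 := by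
    rw [show (32 : ℝ) = 2 ^ 5 by norm_num, Real.log_pow]
    push_cast; ring
  have hq : harmonic 32 ≤ (8131471803 / 2000000000 : ℚ) := by
    norm_num [harmonic, Finset.sum_range_succ]
  have hh : ((harmonic 32 : ℚ) : ℝ) ≤ 8131471803 / 2000000000 := by
    have := (Rat.cast_le (K := ℝ)).mpr hq
    norm_num at this
    convert this using 2
    norm_num
  rw [hlog] at h
  nlinarith [Real.log_two_gt_d9]

lemma exp_neg_gamma_gt : 109 / 200 < Real.exp (-γ) := by
  have h1 : Real.exp (0.6 : ℝ) < 200 / 109 := by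
    have h := Real.exp_bound' (x := 0.6) (by norm_num) (by norm_num) (n := 6) (by norm_num)
    refine lt_of_le_of_lt h ?_
    norm_num [Finset.sum_range_succ, Nat.factorial]
  have h2 : Real.exp (-(0.6:ℝ)) < Real.exp (-γ) :=
    Real.exp_lt_exp.mpr (by linarith [gamma_lt_six_tenths])
  refine lt_trans ?_ h2
  rw [Real.exp_neg]
  rw [show (109:ℝ)/200 = (200/109)⁻¹ by norm_num]
  exact inv_strictAnti₀ (Real.exp_pos _) h1

/-- The lower-bound sequence. -/
noncomputable def Lseq (n : ℕ) : ℝ := (harmonic n : ℝ) - Real.log ((n : ℝ) + 1 / 2)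

lemma Lseq_strictAnti : StrictAnti Lseq := by
  refine strictAnti_nat_of_succ_lt fun n => ?_
  have hn1 : (0:ℝ) < (n : ℝ) + 1 := by positivity
  have hx : (0:ℝ) < 1 / ((n : ℝ) + 1) := by positivity
  have hx1 : 1 / ((n : ℝ) + 1) ≤ 1 := by
    rw [div_le_one hn1]; linarith [Nat.cast_nonneg (α := ℝ) n]
  have h := exp_lt_pade hx hx1
  have heq : (2 + 1 / ((n:ℝ) + 1)) / (2 - 1 / ((n:ℝ) + 1))
      = ((n:ℝ) + 1 + 1 / 2) / ((n:ℝ) + 1 / 2) := by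
    rw [div_eq_div_iff (by linarith) (by positivity)]
    field_simp
    ring
  rw [heq] at h
  have hlog : 1 / ((n:ℝ) + 1) < Real.log (((n:ℝ) + 1 + 1 / 2) / ((n:ℝ) + 1 / 2)) := by
    rw [Real.lt_log_iff_exp_lt (by positivity)]
    exact h
  rw [Real.log_div (by positivity) (by positivity)] at hlog
  simp only [Lseq, harmonic_cast_succ]
  push_cast
  linarith

lemma Lseq_tendsto : Tendsto Lseq atTop (𝓝 γ) := by
  have h := Real.tendsto_eulerMascheroniSeq.add (tendsto_log_sub_log 1 (1/2))
  rw [add_zero] at h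
  refine h.congr fun n => ?_
  simp only [Real.eulerMascheroniSeq, Lseq]
  push_cast
  ring

lemma gamma_lt_Lseq (n : ℕ) : γ < Lseq n :=
  (Lseq_strictAnti.antitone.le_of_tendsto Lseq_tendsto (n + 1)).trans_lt
    (Lseq_strictAnti (Nat.lt_succ_self n))

/-- The upper-bound sequence (shifted by one so that it is strictly antitone everywhere). -/
noncomputable def Useq (n : ℕ) : ℝ :=
  Real.log ((n : ℝ) + 1 + Real.exp (-γ)) + γ - (harmonic (n + 1) : ℝ)

lemma Useq_strictAnti : StrictAnti Useq := by
  refine strictAnti_nat_of_succ_lt fun n => ?_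
  have hcpos : (0:ℝ) < Real.exp (-γ) := Real.exp_pos _
  have hcge : 109 / 200 < Real.exp (-γ) := exp_neg_gamma_gt
  set c : ℝ := Real.exp (-γ) with hc
  set y : ℝ := (n : ℝ) + 1 with hy
  have hy1 : (1:ℝ) ≤ y := by
    rw [hy]; linarith [Nat.cast_nonneg (α := ℝ) n]
  have hyc : (0:ℝ) < y + c := by linarith
  have h1 : (y + 1 + c) / (y + c) = 1 + 1 / (y + c) := by
    field_simp
    ring
  have h2 : 1 / (y + c) ≤ 1 / (y + 109 / 200) := by
    gcongr <;> linarith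
  have h3 := key_upper y hy1
  have h4 : (y + 1 + c) / (y + c) < Real.exp (1 / (y + 1)) := by
    rw [h1]; linarith
  have hlog : Real.log ((y + 1 + c) / (y + c)) < 1 / (y + 1) := by
    rw [Real.log_lt_iff_lt_exp (by positivity)]
    exact h4
  rw [Real.log_div (by positivity) (by positivity)] at hlog
  simp only [Useq, harmonic_cast_succ]
  rw [hy] at hlog
  push_cast at hlog ⊢
  linarith

lemma Useq_tendsto : Tendsto Useq atTop (𝓝 0) := by
  have hV : Tendsto (fun m : ℕ => Real.log ((m : ℝ) + Real.exp (-γ)) + γ - (harmonic m : ℝ))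
      atTop (𝓝 0) := by
    have h1 := tendsto_log_sub_log (Real.exp (-γ)) 1
    have h2 := Real.tendsto_eulerMascheroniSeq
    have h := (h1.sub h2).add_const γ
    rw [show (0:ℝ) - γ + γ = 0 by ring] at h
    refine h.congr fun n => ?_
    simp only [Real.eulerMascheroniSeq]
    push_cast
    ring
  have h := hV.comp (tendsto_add_atTop_nat 1)
  refine h.congr fun n => ?_
  simp only [Function.comp_apply, Useq]
  push_cast
  ring

lemma Useq_pos (n : ℕ) : 0 < Useq n :=
  lt_of_le_of_lt (Useq_strictAnti.antitone.le_of_tendsto Useq_tendsto (n + 1))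
    (Useq_strictAnti (Nat.lt_succ_self n))

/-- For every integer T ≥ 1, ln(T + 1/2) < ψ(T+1) < ln(T + e^{−γ}), where γ is the
Euler–Mascheroni constant. -/
theorem digamma_succ_bounds (T : ℕ) (hT : 1 ≤ T) :
    Real.log ((T : ℝ) + 1 / 2) < digamma ((T : ℝ) + 1)
    ∧ digamma ((T : ℝ) + 1) < Real.log ((T : ℝ) + Real.exp (-Real.eulerMascheroniConstant)) := by
  obtain ⟨S, rfl⟩ : ∃ S, T = S + 1 := ⟨T - 1, (Nat.succ_pred_eq_of_pos hT).symm⟩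
  rw [digamma_nat_add_one (S + 1)]
  constructor
  · have h1 := gamma_lt_Lseq (S + 1)
    simp only [Lseq] at h1
    push_cast at h1 ⊢
    linarith
  · have h2 := Useq_pos S
    simp only [Useq] at h2
    push_cast at h2 ⊢
    linarith
end

section
/- Consider the bilinear optimization problem: maximize over 0 ≤ γ_c ≤ γ_{rd1} and 0 ≤ p ≤ 1 the quantity min{ p·((T−1)(γ_{rd2} − γ_{rd1}) − γ_c) + (T−1)γ_{rd1}, (T−1)γ_{sr2} + p·((T−2)γ_c − (T−1)γ_{rd1}) + (T−1)γ_{rd1} }, under the assumptions T ≥ 2, γ_{rd2} ≥ γ_{rd1} ≥ 0, γ_{rd2} ≥ γ_{sr2} ≥ 0. If (T−2)γ_{rd2} − (T−1)γ_{rd1} ≤ 0, then the optimal value equals (T−1)(γ_{sr2} + γ_{rd1} − γ_{sr2}γ_{rd1}/γ_{rd2}), attained at γ_c = 0, p = γ_{sr2}/γ_{rd2} (with the convention that when γ_{rd2} = 0 the optimal value is (T−1)γ_{rd1}). -/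
/-- Case 1 of the bilinear gDoF optimization for the noncoherent diamond network.
Maximize over 0 ≤ γc ≤ γrd1 and 0 ≤ p ≤ 1 the quantity
  min{ p((T−1)(γrd2−γrd1)−γc) + (T−1)γrd1 , (T−1)γsr2 + p((T−2)γc−(T−1)γrd1) + (T−1)γrd1 }.
Under T ≥ 2, γrd2 ≥ γrd1 ≥ 0, γrd2 ≥ γsr2 ≥ 0 and (T−2)γrd2 − (T−1)γrd1 ≤ 0, the optimal
value is (T−1)(γsr2 + γrd1 − γsr2·γrd1/γrd2), attained at γc = 0, p = γsr2/γrd2.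
(Division by zero in Lean implements the stated convention for γrd2 = 0.) -/
theorem bilinear_opt_case1 (T : ℕ) (hT : 2 ≤ T) (γsr2 γrd1 γrd2 : ℝ)
    (h1 : 0 ≤ γrd1) (h2 : γrd1 ≤ γrd2) (h3 : 0 ≤ γsr2) (h4 : γsr2 ≤ γrd2)
    (hcase : ((T : ℝ) - 2) * γrd2 - ((T : ℝ) - 1) * γrd1 ≤ 0) :
    IsGreatest {v : ℝ | ∃ γc p : ℝ, 0 ≤ γc ∧ γc ≤ γrd1 ∧ 0 ≤ p ∧ p ≤ 1 ∧
        v = min (p * (((T : ℝ) - 1) * (γrd2 - γrd1) - γc) + ((T : ℝ) - 1) * γrd1)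
                (((T : ℝ) - 1) * γsr2 + p * (((T : ℝ) - 2) * γc - ((T : ℝ) - 1) * γrd1)
                  + ((T : ℝ) - 1) * γrd1)}
      (((T : ℝ) - 1) * (γsr2 + γrd1 - γsr2 * γrd1 / γrd2))
    ∧ min ((γsr2 / γrd2) * (((T : ℝ) - 1) * (γrd2 - γrd1) - 0) + ((T : ℝ) - 1) * γrd1)
          (((T : ℝ) - 1) * γsr2
            + (γsr2 / γrd2) * (((T : ℝ) - 2) * 0 - ((T : ℝ) - 1) * γrd1)
            + ((T : ℝ) - 1) * γrd1)
        = ((T : ℝ) - 1) * (γsr2 + γrd1 - γsr2 * γrd1 / γrd2) := by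
  have hT2 : (2 : ℝ) ≤ (T : ℝ) := by exact_mod_cast hT
  have ht1 : (0 : ℝ) ≤ (T : ℝ) - 1 := by linarith
  have ht2 : (0 : ℝ) ≤ (T : ℝ) - 2 := by linarith
  -- the equality at the optimum
  have heq : min ((γsr2 / γrd2) * (((T : ℝ) - 1) * (γrd2 - γrd1) - 0) + ((T : ℝ) - 1) * γrd1)
          (((T : ℝ) - 1) * γsr2
            + (γsr2 / γrd2) * (((T : ℝ) - 2) * 0 - ((T : ℝ) - 1) * γrd1)
            + ((T : ℝ) - 1) * γrd1)
        = ((T : ℝ) - 1) * (γsr2 + γrd1 - γsr2 * γrd1 / γrd2) := by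
    rcases eq_or_lt_of_le (h3.trans h4) with h0 | hpos
    · have hs : γsr2 = 0 := le_antisymm (h4.trans h0.ge) h3
      have hr : γrd1 = 0 := le_antisymm (h2.trans h0.ge) h1
      simp [hs, hr, ← h0]
    · have e1 : (γsr2 / γrd2) * (((T : ℝ) - 1) * (γrd2 - γrd1) - 0) + ((T : ℝ) - 1) * γrd1
          = ((T : ℝ) - 1) * (γsr2 + γrd1 - γsr2 * γrd1 / γrd2) := by
        field_simp
        ring
      have e2 : ((T : ℝ) - 1) * γsr2
            + (γsr2 / γrd2) * (((T : ℝ) - 2) * 0 - ((T : ℝ) - 1) * γrd1)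
            + ((T : ℝ) - 1) * γrd1
          = ((T : ℝ) - 1) * (γsr2 + γrd1 - γsr2 * γrd1 / γrd2) := by
        field_simp
        ring
      rw [e1, e2, min_self]
  refine ⟨⟨⟨0, γsr2 / γrd2, le_refl 0, h1, div_nonneg h3 (h1.trans h2),
      div_le_one_of_le₀ h4 (h1.trans h2), heq.symm⟩, ?_⟩, heq⟩
  rintro v ⟨γc, p, hγc0, hγc1, hp0, hp1, hv⟩
  rcases eq_or_lt_of_le (h3.trans h4) with h0 | hpos
  · have hs : γsr2 = 0 := le_antisymm (h4.trans h0.ge) h3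
    have hr : γrd1 = 0 := le_antisymm (h2.trans h0.ge) h1
    have hc : γc = 0 := le_antisymm (hγc1.trans_eq hr) hγc0
    simp [hs, hr, hc, ← h0] at hv ⊢
    simp [hv]
  -- now γrd2 > 0
  set t : ℝ := (T : ℝ) - 1 with hts
  set α : ℝ := t * (γrd2 - γrd1) - γc with hαs
  set β : ℝ := ((T : ℝ) - 2) * γc - t * γrd1 with hβs
  have hvA : v ≤ p * α + t * γrd1 := hv.le.trans (min_le_left _ _)
  have hvB : v ≤ t * γsr2 + p * β + t * γrd1 := hv.le.trans (min_le_right _ _)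
  have hβ : β ≤ 0 := by
    have : ((T : ℝ) - 2) * γc ≤ ((T : ℝ) - 2) * γrd1 := by
      exact mul_le_mul_of_nonneg_left hγc1 ht2
    rw [hβs]; rw [hts]; linarith only [this, h1]
  have hVform : t * (γsr2 + γrd1 - γsr2 * γrd1 / γrd2)
      = (t * γrd1 * γrd2 + t * γsr2 * (γrd2 - γrd1)) / γrd2 := by
    field_simp
    ring
  rw [hVform, le_div_iff₀ hpos]
  by_cases hα : α ≤ 0
  · -- v ≤ A ≤ t*γrd1, and t*γrd1*γrd2 ≤ RHS
    have h5 : p * α ≤ 0 := mul_nonpos_of_nonneg_of_nonpos hp0 hα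
    have h6 : 0 ≤ t * γsr2 * (γrd2 - γrd1) :=
      mul_nonneg (mul_nonneg ht1 h3) (by linarith)
    nlinarith [mul_le_mul_of_nonneg_right (hvA.trans (by linarith : p * α + t * γrd1 ≤ t * γrd1)) hpos.le]
  · push_neg at hα
    have hd : 0 < α - β := by linarith
    -- (α-β) v ≤ (α-β) t γrd1 + α t γsr2
    have h5 : (α - β) * v ≤ (α - β) * (t * γrd1) + α * (t * γsr2) := by
      linarith only [mul_le_mul_of_nonneg_left hvA (by linarith : (0:ℝ) ≤ -β),
        mul_le_mul_of_nonneg_left hvB hα.le]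
    have h6 : α * (t * γsr2) * γrd2 ≤ (α - β) * (t * γsr2 * (γrd2 - γrd1)) := by
      have hcore : ((T : ℝ) - 1) * γsr2 * γc * (((T : ℝ) - 2) * γrd2 - ((T : ℝ) - 1) * γrd1) ≤ 0 :=
        mul_nonpos_of_nonneg_of_nonpos (mul_nonneg (mul_nonneg ht1 h3) hγc0) hcase
      rw [hαs, hβs, hts]
      linarith only [hcore]
    have h8 : (α - β) * (v * γrd2)
        ≤ (α - β) * (t * γrd1 * γrd2 + t * γsr2 * (γrd2 - γrd1)) := by
      linarith only [mul_le_mul_of_nonneg_right h5 hpos.le, h6]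
    exact le_of_mul_le_mul_left h8 hd
end

section
/- Consider the bilinear optimization problem: maximize over 0 ≤ γ_c ≤ γ_{rd1} and 0 ≤ p ≤ 1 the quantity min{ p·((T−1)(γ_{rd2} − γ_{rd1}) − γ_c) + (T−1)γ_{rd1}, (T−1)γ_{sr2} + p·((T−2)γ_c − (T−1)γ_{rd1}) + (T−1)γ_{rd1} }, under T ≥ 2, γ_{rd2} ≥ γ_{rd1} ≥ 0, γ_{rd2} ≥ γ_{sr2} ≥ 0, and (T−2)γ_{rd2} − (T−1)γ_{rd1} > 0. If additionally γ_{rd2} ≤ γ_{sr2} + γ_{rd1}, then the optimal value equals γ_{sr2} + (T−2)γ_{rd2}, attained at γ_c = γ_{rd2} − γ_{sr2}, p = 1. -/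
/-- Case 2.2 of the bilinear gDoF optimization for the noncoherent diamond network.
Under T ≥ 2, γrd2 ≥ γrd1 ≥ 0, γrd2 ≥ γsr2 ≥ 0, (T−2)γrd2 − (T−1)γrd1 > 0 and
γrd2 ≤ γsr2 + γrd1, the optimal value of
  max_{0≤γc≤γrd1, 0≤p≤1} min{ p((T−1)(γrd2−γrd1)−γc) + (T−1)γrd1 ,
    (T−1)γsr2 + p((T−2)γc−(T−1)γrd1) + (T−1)γrd1 }
is γsr2 + (T−2)γrd2, attained at γc = γrd2 − γsr2, p = 1. -/
theorem bilinear_opt_case2_2 (T : ℕ) (hT : 2 ≤ T) (γsr2 γrd1 γrd2 : ℝ)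
    (h1 : 0 ≤ γrd1) (h2 : γrd1 ≤ γrd2) (h3 : 0 ≤ γsr2) (h4 : γsr2 ≤ γrd2)
    (hcase : 0 < ((T : ℝ) - 2) * γrd2 - ((T : ℝ) - 1) * γrd1)
    (hsub : γrd2 ≤ γsr2 + γrd1) :
    IsGreatest {v : ℝ | ∃ γc p : ℝ, 0 ≤ γc ∧ γc ≤ γrd1 ∧ 0 ≤ p ∧ p ≤ 1 ∧
        v = min (p * (((T : ℝ) - 1) * (γrd2 - γrd1) - γc) + ((T : ℝ) - 1) * γrd1)
                (((T : ℝ) - 1) * γsr2 + p * (((T : ℝ) - 2) * γc - ((T : ℝ) - 1) * γrd1)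
                  + ((T : ℝ) - 1) * γrd1)}
      (γsr2 + ((T : ℝ) - 2) * γrd2)
    ∧ min (1 * (((T : ℝ) - 1) * (γrd2 - γrd1) - (γrd2 - γsr2)) + ((T : ℝ) - 1) * γrd1)
          (((T : ℝ) - 1) * γsr2
            + 1 * (((T : ℝ) - 2) * (γrd2 - γsr2) - ((T : ℝ) - 1) * γrd1)
            + ((T : ℝ) - 1) * γrd1)
        = γsr2 + ((T : ℝ) - 2) * γrd2 := by
  have hT2 : (2:ℝ) ≤ (T:ℝ) := by exact_mod_cast hT
  have hatt : min (1 * (((T : ℝ) - 1) * (γrd2 - γrd1) - (γrd2 - γsr2)) + ((T : ℝ) - 1) * γrd1)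
          (((T : ℝ) - 1) * γsr2
            + 1 * (((T : ℝ) - 2) * (γrd2 - γsr2) - ((T : ℝ) - 1) * γrd1)
            + ((T : ℝ) - 1) * γrd1)
        = γsr2 + ((T : ℝ) - 2) * γrd2 := by
    rw [min_eq_left (le_of_eq (by ring))]; ring
  refine ⟨⟨⟨γrd2 - γsr2, 1, by linarith, by linarith, by norm_num, by norm_num, hatt.symm⟩, ?_⟩, hatt⟩
  rintro v ⟨γc, p, hc0, hc1, hp0, hp1, rfl⟩
  set X := p * (((T : ℝ) - 1) * (γrd2 - γrd1) - γc) + ((T : ℝ) - 1) * γrd1 with hX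
  set Y := ((T : ℝ) - 1) * γsr2 + p * (((T : ℝ) - 2) * γc - ((T : ℝ) - 1) * γrd1)
      + ((T : ℝ) - 1) * γrd1 with hY
  have hmX : min X Y ≤ X := min_le_left _ _
  have hmY : min X Y ≤ Y := min_le_right _ _
  have key : ((T:ℝ) - 2) * X + Y ≤ ((T:ℝ) - 1) * (γsr2 + ((T : ℝ) - 2) * γrd2) := by
    nlinarith [mul_nonneg (sub_nonneg.2 hp1) hcase.le]
  have h5 : ((T:ℝ) - 1) * min X Y ≤ ((T:ℝ) - 2) * X + Y := by
    nlinarith [mul_nonneg (by linarith : (0:ℝ) ≤ (T:ℝ) - 2) (sub_nonneg.2 hmX)]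
  have hT1 : (0:ℝ) < (T:ℝ) - 1 := by linarith
  nlinarith [mul_le_mul_of_nonneg_left (le_trans h5 key) (le_of_lt hT1)]
end

section
/- Let p ∈ [0,1], T ≥ 1 an integer, and ρ², t > 0 constants with p·a ≤ t for some a ≥ 0. Then p·(T−1)·log₂(ρ²·(t/p) + 1) ≤ p·(T−1)·log₂(ρ²·t + 1) + (T−1)·log₂(e)/e. (Used with a = |c|² and the convention that the left side is 0 when p = 0.) -/
/-- For p ∈ [0,1], T ≥ 1, ρ², t > 0, a ≥ 0 with p·a ≤ t:
  p(T−1)log₂(ρ²(t/p)+1) ≤ p(T−1)log₂(ρ²t+1) + (T−1)log₂(e)/e.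
(In Lean t/0 = 0, implementing the convention that the left side is 0 when p = 0.) -/
theorem power_scaling_log_bound (p t ρ2 a : ℝ) (T : ℕ) (hT : 1 ≤ T)
    (hp0 : 0 ≤ p) (hp1 : p ≤ 1) (hρ : 0 < ρ2) (ht : 0 < t) (ha : 0 ≤ a)
    (hpa : p * a ≤ t) :
    p * ((T : ℝ) - 1) * Real.logb 2 (ρ2 * (t / p) + 1)
      ≤ p * ((T : ℝ) - 1) * Real.logb 2 (ρ2 * t + 1)
        + ((T : ℝ) - 1) * Real.logb 2 (Real.exp 1) / Real.exp 1 := by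
  have hlog2 : (0:ℝ) < Real.log 2 := Real.log_pos (by norm_num)
  have hT' : (0:ℝ) ≤ (T : ℝ) - 1 := by
    have : (1:ℝ) ≤ (T : ℝ) := by exact_mod_cast hT
    linarith
  have hE : (0:ℝ) < Real.exp 1 := Real.exp_pos 1
  have hlogbE : Real.logb 2 (Real.exp 1) = 1 / Real.log 2 := by
    rw [Real.logb, Real.log_exp]
  have key : p * Real.logb 2 (ρ2 * (t / p) + 1)
      ≤ p * Real.logb 2 (ρ2 * t + 1) + Real.logb 2 (Real.exp 1) / Real.exp 1 := by
    rcases eq_or_lt_of_le hp0 with h0 | hp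
    · rw [← h0]
      have : (0:ℝ) ≤ Real.logb 2 (Real.exp 1) / Real.exp 1 := by
        rw [hlogbE]; positivity
      simpa using this
    · have hpne : p ≠ 0 := ne_of_gt hp
      have harg : ρ2 * (t / p) + 1 = (ρ2 * t + p) / p := by
        field_simp
      have hpos : (0:ℝ) < ρ2 * t + p := by positivity
      rw [harg, Real.logb_div (ne_of_gt hpos) hpne]
      -- bound 1
      have hb1 : Real.logb 2 (ρ2 * t + p) ≤ Real.logb 2 (ρ2 * t + 1) :=
        Real.logb_le_logb_of_le (by norm_num) hpos (by linarith)
      -- bound 2 : -p * log p ≤ 1/e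
      have hlogle : Real.log (1 / p) ≤ (1 / p) / Real.exp 1 := by
        have h := Real.log_le_sub_one_of_pos (show (0:ℝ) < (1 / p) / Real.exp 1 by positivity)
        have heq : Real.log ((1 / p) / Real.exp 1) = Real.log (1 / p) - 1 := by
          rw [Real.log_div (by positivity) (ne_of_gt hE), Real.log_exp]
        linarith [heq ▸ h]
      have hb2 : -(p * Real.log p) ≤ 1 / Real.exp 1 := by
        have h1 : Real.log (1 / p) = -Real.log p := by
          rw [Real.log_div one_ne_zero hpne, Real.log_one]; ring
        have h2 : p * Real.log (1 / p) ≤ p * ((1 / p) / Real.exp 1) :=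
          mul_le_mul_of_nonneg_left hlogle hp0
        have h3 : p * ((1 / p) / Real.exp 1) = 1 / Real.exp 1 := by
          field_simp
        rw [h1] at h2; rw [h3] at h2; linarith
      have hb2' : -(p * Real.logb 2 p) ≤ Real.logb 2 (Real.exp 1) / Real.exp 1 := by
        have e1 : -(p * Real.logb 2 p) = (-(p * Real.log p)) / Real.log 2 := by
          rw [Real.logb]; ring
        have e2 : Real.logb 2 (Real.exp 1) / Real.exp 1
            = (1 / Real.exp 1) / Real.log 2 := by
          rw [hlogbE]; ring
        rw [e1, e2]
        gcongr
      have hmul : p * (Real.logb 2 (ρ2 * t + p) - Real.logb 2 p)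
          = p * Real.logb 2 (ρ2 * t + p) - p * Real.logb 2 p := by ring
      rw [hmul]
      have : p * Real.logb 2 (ρ2 * t + p) ≤ p * Real.logb 2 (ρ2 * t + 1) :=
        mul_le_mul_of_nonneg_left hb1 hp0
      linarith
  have h := mul_le_mul_of_nonneg_left key hT'
  ring_nf at h ⊢
  linarith
end
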